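/- Let x ∈ ℝ^N be zero-mean with covariance C_x, ȳ ∈ ℝ^M zero-mean with covariance C_ȳ, and E = E[ȳ xᵀ] with E having linearly independent columns. Then the LS estimator x̂ = C_x E⁺ ȳ, with E⁺ = (EᵀE)^{-1}Eᵀ, has mean-squared error E[‖x − x̂‖²] = tr(C_x E⁺ C_ȳ (E⁺)ᵀ C_x − C_x). -/

import Mathlib

open MeasureTheory ProbabilityTheory Real Matrix Filter

noncomputable def stdNormalCDF (t : ℝ) : ℝ :=
  ∫ s in Set.Iic t, (Real.sqrt (2 * Real.pi))⁻¹ * Real.exp (-(s ^ 2) / 2)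

noncomputable def stdNormalPDF (t : ℝ) : ℝ :=
  (Real.sqrt (2 * Real.pi))⁻¹ * Real.exp (-(t ^ 2) / 2)

noncomputable def probitSigmoid (σ t : ℝ) : ℝ := 2 * stdNormalCDF (t / σ) - 1

noncomputable def sgn (t : ℝ) : ℝ := if 0 ≤ t then 1 else -1

/-!
Write `A = C_x E⁺`. Since `E⁺ E = 1`, `A E = C_x`. Expanding the square,
`E‖x - A ȳ‖² = tr C_x - 2 tr (A E) + tr (A C_ȳ Aᵀ) = tr (A C_ȳ Aᵀ) - tr C_x`,
and `A C_ȳ Aᵀ = C_x E⁺ C_ȳ (E⁺)ᵀ C_x` because `C_x` is symmetric. Each of the three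
expectations is that of a bilinear form `(A u)·(B v)`, which equals `tr (A E[u vᵀ] Bᵀ)`.
-/

section CrossMoment

variable {Ω l m n : Type*} [MeasurableSpace Ω]

noncomputable def crossMoment (μ : Measure Ω) (u : Ω → m → ℝ) (v : Ω → n → ℝ) : Matrix m n ℝ :=
  of fun i j => ∫ ω, u ω i * v ω j ∂μ

theorem crossMoment_transpose (μ : Measure Ω) (u : Ω → m → ℝ) (v : Ω → n → ℝ) :
    (crossMoment μ u v)ᵀ = crossMoment μ v u := by
  ext i j
  simp only [crossMoment, transpose_apply, of_apply, mul_comm]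

variable [Fintype l] [Fintype m] [Fintype n]

theorem mulVec_dotProduct_mulVec_eq_sum (A : Matrix l m ℝ) (B : Matrix l n ℝ)
    (a : m → ℝ) (b : n → ℝ) :
    (A *ᵥ a) ⬝ᵥ (B *ᵥ b) = ∑ i, ∑ k, ∑ j, A i k * B i j * (a k * b j) := by
  simp only [dotProduct, mulVec, Finset.sum_mul_sum]
  exact Finset.sum_congr rfl fun i _ => Finset.sum_congr rfl fun k _ =>
    Finset.sum_congr rfl fun j _ => by ring

variable {μ : Measure Ω} {u : Ω → m → ℝ} {v : Ω → n → ℝ}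

theorem integrable_mulVec_dotProduct_mulVec
    (huv : ∀ k j, Integrable (fun ω => u ω k * v ω j) μ) (A : Matrix l m ℝ) (B : Matrix l n ℝ) :
    Integrable (fun ω => (A *ᵥ u ω) ⬝ᵥ (B *ᵥ v ω)) μ := by
  simp only [mulVec_dotProduct_mulVec_eq_sum]
  exact integrable_finsetSum _ fun i _ => integrable_finsetSum _ fun k _ =>
    integrable_finsetSum _ fun j _ => (huv k j).const_mul _

theorem integral_mulVec_dotProduct_mulVec
    (huv : ∀ k j, Integrable (fun ω => u ω k * v ω j) μ) (A : Matrix l m ℝ) (B : Matrix l n ℝ) :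
    ∫ ω, (A *ᵥ u ω) ⬝ᵥ (B *ᵥ v ω) ∂μ = trace (A * crossMoment μ u v * Bᵀ) := by
  simp only [mulVec_dotProduct_mulVec_eq_sum, trace, diag_apply, mul_apply, transpose_apply,
    crossMoment, of_apply, Finset.sum_mul]
  rw [integral_finsetSum _ fun i _ => integrable_finsetSum _ fun k _ =>
    integrable_finsetSum _ fun j _ => (huv k j).const_mul _]
  refine Finset.sum_congr rfl fun i _ => ?_
  rw [integral_finsetSum _ fun k _ => integrable_finsetSum _ fun j _ => (huv k j).const_mul _,
    Finset.sum_comm]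
  refine Finset.sum_congr rfl fun k _ => ?_
  rw [integral_finsetSum _ fun j _ => (huv k j).const_mul _]
  refine Finset.sum_congr rfl fun j _ => ?_
  rw [integral_const_mul]
  ring

end CrossMoment

theorem sum_sq_sub_mulVec {m n : Type*} [Fintype m] [Fintype n] (A : Matrix m n ℝ)
    (a : m → ℝ) (b : n → ℝ) :
    ∑ i, (a i - (A *ᵥ b) i) ^ 2 = a ⬝ᵥ a - 2 * ((A *ᵥ b) ⬝ᵥ a) + (A *ᵥ b) ⬝ᵥ (A *ᵥ b) := by
  simp only [dotProduct, ← Finset.sum_sub_distrib, Finset.mul_sum, ← Finset.sum_add_distrib]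
  exact Finset.sum_congr rfl fun i _ => by ring

theorem stmt11_general {N M : ℕ} {Ω : Type*} [MeasurableSpace Ω] (μ : Measure Ω)
    (x : Ω → Fin N → ℝ) (y : Ω → Fin M → ℝ)
    (hx2 : ∀ i j, Integrable (fun ω => x ω i * x ω j) μ)
    (hy2 : ∀ i j, Integrable (fun ω => y ω i * y ω j) μ)
    (hxy : ∀ i j, Integrable (fun ω => y ω i * x ω j) μ)
    (Cx : Matrix (Fin N) (Fin N) ℝ)
    (hCx : Cx = Matrix.of fun i j => ∫ ω, x ω i * x ω j ∂μ)
    (Cy : Matrix (Fin M) (Fin M) ℝ)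
    (hCy : Cy = Matrix.of fun i j => ∫ ω, y ω i * y ω j ∂μ)
    (E : Matrix (Fin M) (Fin N) ℝ)
    (hE : E = Matrix.of fun i j => ∫ ω, y ω i * x ω j ∂μ)
    (hrank : IsUnit (Eᵀ * E).det)
    (Epinv : Matrix (Fin N) (Fin M) ℝ)
    (hEpinv : Epinv = (Eᵀ * E)⁻¹ * Eᵀ) :
    ∫ ω, ∑ i, (x ω i - (Cx * Epinv).mulVec (y ω) i) ^ 2 ∂μ =
      Matrix.trace (Cx * Epinv * Cy * Epinvᵀ * Cx - Cx) := by
  change Cx = crossMoment μ x x at hCx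
  change Cy = crossMoment μ y y at hCy
  change E = crossMoment μ y x at hE
  set A := Cx * Epinv
  have hAE : A * E = Cx := by
    rw [Matrix.mul_assoc, hEpinv, Matrix.mul_assoc, nonsing_inv_mul _ hrank, Matrix.mul_one]
  have hCx_symm : Cxᵀ = Cx := by rw [hCx, crossMoment_transpose]
  have hIxx := integrable_mulVec_dotProduct_mulVec hx2 (1 : Matrix (Fin N) _ ℝ) 1
  have hIyx := integrable_mulVec_dotProduct_mulVec hxy A (1 : Matrix (Fin N) _ ℝ)
  have hIyy := integrable_mulVec_dotProduct_mulVec hy2 A A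
  simp only [one_mulVec] at hIxx hIyx
  have hxx := integral_mulVec_dotProduct_mulVec hx2 (1 : Matrix (Fin N) _ ℝ) 1
  have hyx := integral_mulVec_dotProduct_mulVec hxy A (1 : Matrix (Fin N) _ ℝ)
  have hyy := integral_mulVec_dotProduct_mulVec hy2 A A
  simp only [one_mulVec, Matrix.one_mul, Matrix.mul_one, transpose_one] at hxx hyx
  simp_rw [sum_sq_sub_mulVec]
  rw [integral_add, integral_sub, integral_const_mul, hxx, hyx, hyy, ← hCx, ← hE, ← hCy, hAE,
    trace_sub, show Cx * Epinv * Cy * Epinvᵀ * Cx = A * Cy * Aᵀ by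
      rw [transpose_mul, hCx_symm, ← Matrix.mul_assoc]]
  · ring
  · exact hIxx
  · exact hIyx.const_mul 2
  · exact hIxx.sub (hIyx.const_mul 2)
  · exact hIyy

theorem stmt11 {N M : ℕ} {Ω : Type*} [MeasurableSpace Ω] (μ : Measure Ω) [IsProbabilityMeasure μ]
    (x : Ω → Fin N → ℝ) (y : Ω → Fin M → ℝ)
    (hx : Measurable x) (hy : Measurable y)
    (hxmean : ∀ j, ∫ ω, x ω j ∂μ = 0) (hymean : ∀ i, ∫ ω, y ω i ∂μ = 0)
    (hx2 : ∀ i j, Integrable (fun ω => x ω i * x ω j) μ)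
    (hy2 : ∀ i j, Integrable (fun ω => y ω i * y ω j) μ)
    (hxy : ∀ i j, Integrable (fun ω => y ω i * x ω j) μ)
    (Cx : Matrix (Fin N) (Fin N) ℝ)
    (hCx : Cx = Matrix.of fun i j => ∫ ω, x ω i * x ω j ∂μ)
    (Cy : Matrix (Fin M) (Fin M) ℝ)
    (hCy : Cy = Matrix.of fun i j => ∫ ω, y ω i * y ω j ∂μ)
    (E : Matrix (Fin M) (Fin N) ℝ)
    (hE : E = Matrix.of fun i j => ∫ ω, y ω i * x ω j ∂μ)
    (hrank : IsUnit (Eᵀ * E).det)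
    (Epinv : Matrix (Fin N) (Fin M) ℝ)
    (hEpinv : Epinv = (Eᵀ * E)⁻¹ * Eᵀ) :
    ∫ ω, ∑ i, (x ω i - (Cx * Epinv).mulVec (y ω) i) ^ 2 ∂μ =
      Matrix.trace (Cx * Epinv * Cy * Epinvᵀ * Cx - Cx) :=
  stmt11_general μ x y hx2 hy2 hxy Cx hCx Cy hCy E hE hrank Epinv hEpinv
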